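/- The exceptional triangle 2·conv(0, e_1, e_2) in ℤ^2 is not a Lawrence prism: it is not lattice-isomorphic to any polytope conv(e_0, e_0 + h_1(e_2−e_0), e_1, e_1 + h_2(e_2−e_0)) for nonnegative integers h_1, h_2. -/

import Mathlib

open Polynomial MeasureTheory Pointwise

noncomputable section

/-- Embed an integer lattice point into real space. -/
def ivec {n : ℕ} (x : Fin n → ℤ) : Fin n → ℝ := fun i => (x i : ℝ)

/-- Number of lattice points in a subset of `ℝ^n`. -/
def latticeCount {n : ℕ} (S : Set (Fin n → ℝ)) : ℕ :=
  Set.ncard {x : Fin n → ℤ | ivec x ∈ S}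

/-- Dimension of (the affine hull of) a subset of `ℝ^n`. -/
def polyDim {n : ℕ} (S : Set (Fin n → ℝ)) : ℕ :=
  Module.finrank ℝ (affineSpan ℝ S).direction

/-- The `i`-th coefficient of the h*-polynomial, i.e. the `i`-th coefficient of
`(1-t)^(dim+1) * ∑_k |kS ∩ ℤ^n| t^k`. -/
def hstarCoeff {n : ℕ} (S : Set (Fin n → ℝ)) (i : ℕ) : ℤ :=
  ∑ j ∈ Finset.range (i + 1),
    (-1) ^ j * ((polyDim S + 1).choose j : ℤ) *
      (latticeCount ((((i - j : ℕ) : ℝ)) • S) : ℤ)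

/-- The h*-polynomial of a lattice polytope. -/
def hstarPoly {n : ℕ} (S : Set (Fin n → ℝ)) : Polynomial ℤ :=
  ∑ i ∈ Finset.range (polyDim S + 1), Polynomial.C (hstarCoeff S i) * Polynomial.X ^ i

/-- The degree of a lattice polytope: the degree of its h*-polynomial. -/
def degPoly {n : ℕ} (S : Set (Fin n → ℝ)) : ℕ := (hstarPoly S).natDegree

/-- `S` is a lattice polytope: the convex hull of finitely many lattice points. -/
def IsLatticePolytope {n : ℕ} (S : Set (Fin n → ℝ)) : Prop :=
  ∃ V : Finset (Fin n → ℤ), V.Nonempty ∧ S = convexHull ℝ (ivec '' (V : Set (Fin n → ℤ)))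

/-- `e 0, …, e n` form an affine lattice basis of `ℤ^n`. -/
def IsAffineLatticeBasis {n : ℕ} (e : Fin (n + 1) → Fin n → ℤ) : Prop :=
  IsUnit (Matrix.det (Matrix.of fun i j : Fin n => e i.succ j - e 0 j))

/-! The triangle `2·conv(0, e₁, e₂)` has lattice width 2, while a Lawrence prism has lattice
width at most 1: the integer functional `w` dual to `e₁ - e₀` in the lattice basis
`(e₁ - e₀, e₂ - e₀)` takes only values in `[w·e₀, w·e₀ + 1]` on it. If `x ↦ Ax + b` carried the
triangle onto the prism, the integer functional `wᵀA` would differ by even integers at the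
vertices `0, 2e₁, 2e₂` and yet vary by at most 1, so `wᵀA = 0`; as `A` is invertible, `w = 0`,
contradicting `w·(e₁ - e₀) = 1`. -/

open Matrix

lemma ivec_dotProduct_ivec {n : ℕ} (w x : Fin n → ℤ) :
    ivec w ⬝ᵥ ivec x = ((w ⬝ᵥ x : ℤ) : ℝ) := by
  simp [ivec, dotProduct]

lemma map_intCast_mulVec_ivec_add {n : ℕ} (A : Matrix (Fin n) (Fin n) ℤ) (b x : Fin n → ℤ) :
    A.map (Int.cast : ℤ → ℝ) *ᵥ ivec x + ivec b = ivec (A *ᵥ x + b) := by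
  ext i
  simp [ivec, mulVec, dotProduct]

lemma IsAffineLatticeBasis.exists_dual {n : ℕ} {e : Fin (n + 1) → Fin n → ℤ}
    (he : IsAffineLatticeBasis e) (k : Fin n) :
    ∃ w : Fin n → ℤ, ∀ j, w ⬝ᵥ (e j.succ - e 0) = (1 : Matrix (Fin n) (Fin n) ℤ) j k := by
  set B := Matrix.of fun i j : Fin n => e i.succ j - e 0 j
  refine ⟨fun i => B⁻¹ i k, fun j => ?_⟩
  rw [← mul_nonsing_inv B he, mul_apply, dotProduct_comm]
  rfl

lemma convexHull_lawrencePrism_subset_strip {n : ℕ} (e₀ e₁ v w : Fin n → ℤ) (h₁ h₂ : ℕ)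
    (hu : w ⬝ᵥ (e₁ - e₀) = 1) (hv : w ⬝ᵥ v = 0) :
    convexHull ℝ (ivec '' {e₀, e₀ + (h₁ : ℤ) • v, e₁, e₁ + (h₂ : ℤ) • v}) ⊆
      {p | ((w ⬝ᵥ e₀ : ℤ) : ℝ) ≤ ivec w ⬝ᵥ p ∧ ivec w ⬝ᵥ p ≤ (w ⬝ᵥ e₀ : ℤ) + 1} := by
  have hlin : IsLinearMap ℝ (ivec w ⬝ᵥ · : (Fin n → ℝ) → ℝ) :=
    ⟨dotProduct_add _, fun c p => dotProduct_smul c _ p⟩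
  refine convexHull_min ?_ ((convex_halfSpace_ge hlin _).inter (convex_halfSpace_le hlin _))
  rintro _ ⟨x, hx, rfl⟩
  have hx' : w ⬝ᵥ x = w ⬝ᵥ e₀ ∨ w ⬝ᵥ x = w ⬝ᵥ e₀ + 1 := by
    rw [dotProduct_sub, sub_eq_iff_eq_add'] at hu
    rcases hx with rfl | rfl | rfl | rfl <;>
      simp only [dotProduct_add, dotProduct_smul, hu, hv, smul_zero, add_zero, true_or, or_true]
  simp only [Set.mem_ofPred_eq, ivec_dotProduct_ivec]
  rcases hx' with h | h <;> rw [h] <;> push_cast <;> constructor <;> linarith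

lemma vecMul_eq_zero_of_triangle_mem_strip (A : Matrix (Fin 2) (Fin 2) ℤ) (b w : Fin 2 → ℤ)
    (c : ℤ) (h : ∀ x ∈ ({![0, 0], ![2, 0], ![0, 2]} : Set (Fin 2 → ℤ)),
      c ≤ w ⬝ᵥ (A *ᵥ x + b) ∧ w ⬝ᵥ (A *ᵥ x + b) ≤ c + 1) :
    w ᵥ* A = 0 := by
  have h₀ := h ![0, 0] (by simp)
  have h₁ := h ![2, 0] (by simp)
  have h₂ := h ![0, 2] (by simp)
  simp only [dotProduct_add, dotProduct_mulVec] at h₀ h₁ h₂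
  generalize w ᵥ* A = φ at h₀ h₁ h₂
  simp only [dotProduct, Fin.sum_univ_two] at h₀ h₁ h₂
  ext j
  fin_cases j <;> simp at h₀ h₁ h₂ ⊢ <;> omega

/-- the exceptional triangle `2·conv(0, e_1, e_2)` in `ℤ^2` is not
lattice-isomorphic to any Lawrence prism
`conv(e_0, e_0 + h_1(e_2 - e_0), e_1, e_1 + h_2(e_2 - e_0))`. -/
theorem stmt11 :
    ¬ ∃ (A : Matrix (Fin 2) (Fin 2) ℤ) (b : Fin 2 → ℤ) (h₁ h₂ : ℕ)
        (e : Fin 3 → Fin 2 → ℤ),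
      IsUnit A.det ∧ IsAffineLatticeBasis e ∧
      (fun x : Fin 2 → ℝ => (A.map (fun a : ℤ => (a : ℝ))).mulVec x + ivec b) ''
          (convexHull ℝ {![(0 : ℝ), 0], ![2, 0], ![0, 2]}) =
        convexHull ℝ (ivec ''
          {e 0, e 0 + (h₁ : ℤ) • (e 2 - e 0), e 1, e 1 + (h₂ : ℤ) • (e 2 - e 0)}) := by
  rintro ⟨A, b, h₁, h₂, e, hA, he, H⟩
  obtain ⟨w, hw⟩ := he.exists_dual 0
  have hwu : w ⬝ᵥ (e 1 - e 0) = 1 := hw 0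
  have hwv : w ⬝ᵥ (e 2 - e 0) = 0 := hw 1
  have hstrip := H ▸ convexHull_lawrencePrism_subset_strip (e 0) (e 1) (e 2 - e 0) w h₁ h₂ hwu hwv
  have hwA : w ᵥ* A = 0 := by
    refine vecMul_eq_zero_of_triangle_mem_strip A b w (w ⬝ᵥ e 0) fun x hx => ?_
    have hx' : ivec x ∈ ({![(0 : ℝ), 0], ![2, 0], ![0, 2]} : Set (Fin 2 → ℝ)) := by
      rcases hx with rfl | rfl | rfl <;> simp [ivec, funext_iff, Fin.forall_fin_two]
    have := hstrip ⟨_, subset_convexHull ℝ _ hx', map_intCast_mulVec_ivec_add A b x⟩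
    simp only [Set.mem_ofPred_eq, ivec_dotProduct_ivec] at this
    exact_mod_cast this
  have hw0 : w = 0 := vecMul_injective_of_isUnit ((isUnit_iff_isUnit_det A).2 hA)
    (hwA.trans (zero_vecMul A).symm)
  simp [hw0] at hwu
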